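/- arXiv:2202.08012 — 2 statements merged into one kernel-verified Lean document; each statement's English description precedes it below -/
import Mathlib

section
/- Let K be a number field of degree n over ℚ and let u ∈ K satisfy [ℚ(u):ℚ] = n (so the n embeddings of K into ℂ take pairwise distinct values at u). Suppose σ_a, σ_b, σ_c, σ_d : K → ℂ are embeddings with σ_a ∉ {σ_c, σ_d} and σ_a(u)·σ_b(u) = σ_c(u)·σ_d(u). Then for every embedding ρ : K → ℂ there exist embeddings τ_b, τ_c, τ_d : K → ℂ with τ_c ≠ ρ and τ_d ≠ ρ such that ρ(u)·τ_b(u) = τ_c(u)·τ_d(u). -/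
/-!
Since `K` is algebraic over `ℚ`, all embeddings `K → ℂ` land in the algebraic closure `L` of
`ℚ` in `ℂ`, and the embedding `ρ` extends along `σa : K → L` to a field embedding `ψ : L → ℂ`.
Composing with `ψ` is injective on embeddings, sends `σa` to `ρ` and preserves the relation
`σa u * σb u = σc u * σd u`; so `τ = ψ ∘ σ` for `σ = σb, σc, σd` works.
-/

section AlgebraicClosure

variable {F K Ω : Type*} [Field F] [Field K] [Field Ω] [Algebra F K] [Algebra F Ω]
  [Algebra.IsAlgebraic F K]

theorem AlgHom.mem_algebraicClosure (σ : K →ₐ[F] Ω) (x : K) : σ x ∈ algebraicClosure F Ω :=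
  mem_algebraicClosure_iff.2 ((Algebra.IsAlgebraic.isAlgebraic x).algHom σ)

def AlgHom.toAlgebraicClosure (σ : K →ₐ[F] Ω) : K →ₐ[F] algebraicClosure F Ω :=
  σ.codRestrict (algebraicClosure F Ω).toSubalgebra σ.mem_algebraicClosure

end AlgebraicClosure

theorem AlgHom.exists_comp_eq_of_isAlgebraic {F K E Ω : Type*} [Field F] [Field K] [Field E]
    [Field Ω] [Algebra F K] [Algebra F E] [Algebra F Ω] [Algebra.IsAlgebraic F E] [IsAlgClosed Ω]
    (σ : K →ₐ[F] E) (ρ : K →ₐ[F] Ω) : ∃ ψ : E →ₐ[F] Ω, ψ.comp σ = ρ := by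
  let _ : Algebra K E := σ.toRingHom.toAlgebra
  let _ : Algebra K Ω := ρ.toRingHom.toAlgebra
  have : IsScalarTower F K E := .of_algebraMap_eq fun x => (σ.commutes x).symm
  have : IsScalarTower F K Ω := .of_algebraMap_eq fun x => (ρ.commutes x).symm
  have : Algebra.IsAlgebraic K E := Algebra.IsAlgebraic.tower_top K (K := F)
  exact ⟨(IsAlgClosed.lift : E →ₐ[K] Ω).restrictScalars F,
    AlgHom.ext fun x => (IsAlgClosed.lift : E →ₐ[K] Ω).commutes x⟩

theorem exists_transported_multiplicative_relation_general
    (K : Type*) [Field K] [NumberField K] (u : K)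
    (σa σb σc σd : K →+* ℂ) (hac : σa ≠ σc) (had : σa ≠ σd)
    (hrel : σa u * σb u = σc u * σd u) :
    ∀ ρ : K →+* ℂ, ∃ τb τc τd : K →+* ℂ,
      τc ≠ ρ ∧ τd ≠ ρ ∧ ρ u * τb u = τc u * τd u := by
  intro ρ
  let r (σ : K →+* ℂ) : K →ₐ[ℚ] algebraicClosure ℚ ℂ := σ.toRatAlgHom.toAlgebraicClosure
  -- instance search finds `DivisionRing.toRatAlgebra` here, not the algebra structure of the subfield
  have : Algebra.IsAlgebraic ℚ (algebraicClosure ℚ ℂ) := algebraicClosure.isAlgebraic ℚ ℂ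
  obtain ⟨ψ, hψ⟩ := (r σa).exists_comp_eq_of_isAlgebraic ρ.toRatAlgHom
  let τ (σ : K →+* ℂ) : K →+* ℂ := (ψ.comp (r σ)).toRingHom
  have hτa : τ σa = ρ := congrArg AlgHom.toRingHom hψ
  have hτ_inj : Function.Injective τ := fun σ σ' h => RingHom.ext fun x =>
    congrArg Subtype.val (ψ.injective (RingHom.congr_fun h x))
  have hrel' : r σa u * r σb u = r σc u * r σd u := Subtype.ext hrel
  refine ⟨τ σb, τ σc, τ σd, hτa ▸ hτ_inj.ne hac.symm, hτa ▸ hτ_inj.ne had.symm, ?_⟩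
  calc ρ u * τ σb u = ψ (r σa u * r σb u) := by rw [← hτa, map_mul]; rfl
    _ = τ σc u * τ σd u := by rw [hrel', map_mul]; rfl

/-- Let `K` be a number field of degree `n` and `u ∈ K` of degree `n` over `ℚ`.
If `σa σb σc σd : K →+* ℂ` are embeddings with `σa ∉ {σc, σd}` and
`σa u * σb u = σc u * σd u`, then for every embedding `ρ : K →+* ℂ` there are
embeddings `τb τc τd` with `τc ≠ ρ`, `τd ≠ ρ` and `ρ u * τb u = τc u * τd u`. -/
theorem exists_transported_multiplicative_relation
    (K : Type*) [Field K] [NumberField K] (n : ℕ)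
    (hK : Module.finrank ℚ K = n) (u : K)
    (hu : Module.finrank ℚ (IntermediateField.adjoin ℚ {u}) = n)
    (σa σb σc σd : K →+* ℂ) (hac : σa ≠ σc) (had : σa ≠ σd)
    (hrel : σa u * σb u = σc u * σd u) :
    ∀ ρ : K →+* ℂ, ∃ τb τc τd : K →+* ℂ,
      τc ≠ ρ ∧ τd ≠ ρ ∧ ρ u * τb u = τc u * τd u :=
  exists_transported_multiplicative_relation_general K u σa σb σc σd hac had hrel
end

section
/- Let s ≥ 1 and t ≥ 1 be integers and let j', k', l' be indices in {2, …, s+t}. Then the linear subspace of ℝ^{s+t} defined by the equations x_1 + … + x_s + 2x_{s+1} + … + 2x_{s+t} = 0, x_{s+1} = x_{s+2} = … = x_{s+t}, and x_1 + x_{j'} = x_{k'} + x_{l'} has dimension s − 1. Equivalently, the linear functional x_1 + x_{j'} − x_{k'} − x_{l'} does not vanish identically on the s-dimensional subspace cut out by the first two families of equations. -/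
/-!
Let `U ⊆ ℝ^(s+t)` be the space of vectors that are constant on the last `t` coordinates, i.e.
the vectors factoring through `i ↦ min i s`; it has dimension `s + 1`. Intersecting a subspace with
the kernel of a linear functional that does not vanish on it lowers the dimension by one. The
Dirichlet functional is positive on the all-ones vector, so `V = U ∩ H_Dir` has dimension `s`.
The vector `(-2t, 0, …, 0, 1, …, 1)` lies in `V`, and since its coordinates other than the first
lie in `[0, 1]`, the functional `x₁ + x_{j'} - x_{k'} - x_{l'}` is at most `1 - 2t < 0` on it.
-/

open Module LinearMap

theorem Submodule.finrank_inf_ker_add_one {K E : Type*} [Field K] [AddCommGroup E] [Module K E]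
    [FiniteDimensional K E] {V : Submodule K E} {f : E →ₗ[K] K} {v : E} (hv : v ∈ V)
    (hfv : f v ≠ 0) : finrank K ↥(V ⊓ ker f) + 1 = finrank K V := by
  have hf : f.domRestrict V ≠ 0 := fun h => hfv (LinearMap.congr_fun h ⟨v, hv⟩)
  have hker : ker (f.domRestrict V) = (V ⊓ ker f).comap V.subtype := by
    rw [ker_domRestrict, Submodule.comap_inf, Submodule.comap_subtype_self, top_inf_eq]
  rw [← Dual.finrank_ker_add_one_of_ne_zero hf, hker,
    (Submodule.comapSubtypeEquivOfLe inf_le_left).finrank_eq]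

theorem Fin.clamp_surjective {s t : ℕ} (ht : 0 < t) :
    Function.Surjective fun i : Fin (s + t) => Fin.clamp i s :=
  fun k => ⟨⟨k, by omega⟩, Fin.ext (by simp [Nat.min_eq_left (Nat.le_of_lt_succ k.isLt)])⟩

/-- The paper's `⋂ᵢ Hᵢ`. -/
def tailConstSubmodule (K : Type*) [Semiring K] (s t : ℕ) : Submodule K (Fin (s + t) → K) :=
  range (funLeft K K fun i : Fin (s + t) => Fin.clamp i s)

section TailConst

variable {s t : ℕ}

theorem mem_tailConstSubmodule {K : Type*} [Semiring K] (ht : 0 < t) {x : Fin (s + t) → K} :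
    x ∈ tailConstSubmodule K s t ↔
      ∀ i j : Fin (s + t), s ≤ (i : ℕ) → s ≤ (j : ℕ) → x i = x j := by
  constructor
  · rintro ⟨z, rfl⟩ i j hi hj
    simp [funLeft, Fin.clamp, Nat.min_eq_right hi, Nat.min_eq_right hj]
  · intro hx
    refine ⟨fun k => x ⟨k, by omega⟩, funext fun i => ?_⟩
    rcases lt_or_ge (i : ℕ) s with hi | hi
    · simp [funLeft, Fin.clamp, Nat.min_eq_left hi.le]
    · simpa [funLeft, Fin.clamp, Nat.min_eq_right hi] using hx _ _ le_rfl hi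

theorem finrank_tailConstSubmodule {K : Type*} [DivisionRing K] (ht : 0 < t) :
    finrank K (tailConstSubmodule K s t) = s + 1 := by
  rw [tailConstSubmodule,
    finrank_range_of_inj (funLeft_injective_of_surjective K K _ (Fin.clamp_surjective ht)),
    finrank_fintype_fun_eq_card, Fintype.card_fin]

theorem one_mem_tailConstSubmodule {K : Type*} [Semiring K] :
    (1 : Fin (s + t) → K) ∈ tailConstSubmodule K s t :=
  ⟨1, rfl⟩

end TailConst

def dirichletForm (s t : ℕ) : (Fin (s + t) → ℝ) →ₗ[ℝ] ℝ where
  toFun x := ∑ i : Fin (s + t), if (i : ℕ) < s then x i else 2 * x i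
  map_add' x y := by
    simp only [Pi.add_apply, ← Finset.sum_add_distrib]
    congr 1 with i
    split_ifs <;> ring
  map_smul' c x := by
    simp only [Pi.smul_apply, smul_eq_mul, RingHom.id_apply, Finset.mul_sum]
    congr 1 with i
    split_ifs <;> ring

theorem dirichletForm_apply (s t : ℕ) (x : Fin (s + t) → ℝ) :
    dirichletForm s t x = ∑ i : Fin (s + t), if (i : ℕ) < s then x i else 2 * x i :=
  rfl

theorem dirichletForm_one_pos {s t : ℕ} (ht : 0 < t) : 0 < dirichletForm s t 1 := by
  have : Nonempty (Fin (s + t)) := ⟨⟨0, by omega⟩⟩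
  rw [dirichletForm_apply]
  exact Finset.sum_pos (fun i _ => by split_ifs <;> norm_num) Finset.univ_nonempty

def relationForm {ι : Type*} (i₀ j k l : ι) : (ι → ℝ) →ₗ[ℝ] ℝ :=
  proj (R := ℝ) (φ := fun _ : ι => ℝ) i₀ + proj j - proj k - proj l

theorem relationForm_apply {ι : Type*} (i₀ j k l : ι) (x : ι → ℝ) :
    relationForm i₀ j k l x = x i₀ + x j - x k - x l :=
  rfl

def tailVector (s t : ℕ) : Fin (s + t) → ℝ := fun i =>
  if (i : ℕ) = 0 then -(2 * t) else if (i : ℕ) < s then 0 else 1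

section TailVector

variable {s t : ℕ}

theorem dirichletForm_tailVector (hs : 0 < s) : dirichletForm s t (tailVector s t) = 0 := by
  rw [dirichletForm_apply, Fin.sum_univ_add]
  simp [tailVector, hs, hs.ne',
    Fin.sum_univ_eq_sum_range (fun i => if i = 0 then -(2 * (t : ℝ)) else 0)]
  ring

theorem tailVector_mem (hs : 0 < s) (ht : 0 < t) :
    tailVector s t ∈ tailConstSubmodule ℝ s t ⊓ ker (dirichletForm s t) := by
  refine ⟨(mem_tailConstSubmodule ht).2 fun i j hi hj => ?_, dirichletForm_tailVector hs⟩
  simp only [tailVector, if_neg (show ¬(i : ℕ) = 0 by omega), if_neg (show ¬(j : ℕ) = 0 by omega),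
    if_neg (show ¬(i : ℕ) < s by omega), if_neg (show ¬(j : ℕ) < s by omega)]

theorem relationForm_tailVector_neg (ht : 0 < t) {i₀ j k l : Fin (s + t)}
    (h₀ : (i₀ : ℕ) = 0) (hj : 1 ≤ (j : ℕ)) (hk : 1 ≤ (k : ℕ)) (hl : 1 ≤ (l : ℕ)) :
    relationForm i₀ j k l (tailVector s t) < 0 := by
  have hbound : ∀ i : Fin (s + t), 1 ≤ (i : ℕ) → 0 ≤ tailVector s t i ∧ tailVector s t i ≤ 1 := by
    intro i hi
    simp only [tailVector, if_neg (show ¬(i : ℕ) = 0 by omega)]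
    split_ifs <;> norm_num
  have ht' : (1 : ℝ) ≤ t := by exact_mod_cast ht
  have h₀v : tailVector s t i₀ = -(2 * t) := if_pos h₀
  have := hbound j hj
  have := hbound k hk
  have := hbound l hl
  rw [relationForm_apply, h₀v]
  linarith

end TailVector

/-- For `s ≥ 1`, `t ≥ 1` and indices `j', k', l' ∈ {2, …, s+t}` (here `0`-indexed, so
with index value `≥ 1`), the subspace of `ℝ^(s+t)` cut out by the Dirichlet equation
`x₁ + ⋯ + x_s + 2x_{s+1} + ⋯ + 2x_{s+t} = 0`, the equations
`x_{s+1} = ⋯ = x_{s+t}`, and the extra equation `x₁ + x_{j'} = x_{k'} + x_{l'}`,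
has dimension `s - 1`. -/
theorem dirichlet_subspace_with_extra_relation_dim
    (s t : ℕ) (hs : 1 ≤ s) (ht : 1 ≤ t)
    (j' k' l' : Fin (s + t)) (hj : 1 ≤ (j' : ℕ)) (hk : 1 ≤ (k' : ℕ)) (hl : 1 ≤ (l' : ℕ))
    (W : Submodule ℝ (Fin (s + t) → ℝ))
    (hW : ∀ x : Fin (s + t) → ℝ, x ∈ W ↔
      (∑ i : Fin (s + t), (if (i : ℕ) < s then x i else 2 * x i)) = 0 ∧
      (∀ i j : Fin (s + t), s ≤ (i : ℕ) → s ≤ (j : ℕ) → x i = x j) ∧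
      x ⟨0, by omega⟩ + x j' = x k' + x l') :
    Module.finrank ℝ W = s - 1 := by
  have hW_eq : W = tailConstSubmodule ℝ s t ⊓ ker (dirichletForm s t) ⊓
      ker (relationForm ⟨0, by omega⟩ j' k' l') := by
    ext x
    simp only [hW, Submodule.mem_inf, mem_ker, mem_tailConstSubmodule ht, dirichletForm_apply,
      relationForm_apply, sub_sub, sub_eq_zero]
    tauto
  have hV := Submodule.finrank_inf_ker_add_one one_mem_tailConstSubmodule
    (dirichletForm_one_pos (s := s) ht).ne'
  have hWV := Submodule.finrank_inf_ker_add_one (tailVector_mem hs ht)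
    (relationForm_tailVector_neg (i₀ := ⟨0, by omega⟩) ht rfl hj hk hl).ne
  rw [finrank_tailConstSubmodule ht] at hV
  subst hW_eq
  omega
end
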